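/- There is a constant C depending only on the dimension n and the mollifier φ such that for every locally finite positive Borel measure σ on ℝ^n, every cube Q ∈ P^n, every 0 < ε ≤ ℓ(Q), and every x ∈ ℝ^n: M(1_Q σ_{8ε})(x) ≤ C · M(1_{B_Q(8ε)} σ)(x), where B_Q(δ) = ∪_{y ∈ Q} (y + [−δ,δ]^n) is the δ-enlargement of Q and σ_{8ε} = σ ∗ φ_{8ε}. -/

import Mathlib

open MeasureTheory Set Filter
open scoped ENNReal NNReal

noncomputable section

/-- An axis-parallel half-open cube in `ℝⁿ`, given by its lower corner and (positive)
side length. -/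
structure Cube (n : ℕ) where
  corner : Fin n → ℝ
  side : ℝ
  side_pos : 0 < side

namespace Cube

variable {n : ℕ}

/-- The underlying (half-open) set of the cube. -/
def toSet (Q : Cube n) : Set (Fin n → ℝ) :=
  {x | ∀ i, Q.corner i ≤ x i ∧ x i < Q.corner i + Q.side}

/-- The concentric dilate `ΓQ` of the cube `Q` (same center, side length `Γ·ℓ(Q)`),
as a set. -/
def dilate (Q : Cube n) (Γ : ℝ) : Set (Fin n → ℝ) :=
  {x | ∀ i, Q.corner i - (Γ - 1) * Q.side / 2 ≤ x i ∧
       x i < Q.corner i + Q.side + (Γ - 1) * Q.side / 2}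

/-- Membership in `𝒫ⁿ`: the side length is an integral power of `2`. -/
def memP (Q : Cube n) : Prop := ∃ ℓ : ℤ, Q.side = (2:ℝ) ^ ℓ

end Cube

/-- The translation applied at scale `2^ℓ` in the random dyadic grid determined by `β`:
`Σ_{j : 2^{-j} < 2^ℓ} 2^{-j} β_j`. -/
def gridShift {n : ℕ} (β : ℤ → Fin n → Bool) (ℓ : ℤ) (i : Fin n) : ℝ :=
  ∑' j : ℤ, if (2:ℝ) ^ (-j) < (2:ℝ) ^ ℓ ∧ β j i = true then (2:ℝ) ^ (-j) else 0

/-- Membership in the shifted dyadic grid `𝒟^β`. -/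
def memGrid {n : ℕ} (β : ℤ → Fin n → Bool) (Q : Cube n) : Prop :=
  ∃ (ℓ : ℤ) (k : Fin n → ℤ), Q.side = (2:ℝ) ^ ℓ ∧
    ∀ i, Q.corner i = (2:ℝ) ^ ℓ * (k i : ℝ) + gridShift β ℓ i

/-- The Hardy–Littlewood maximal function of a measure, over cubes in `𝒫ⁿ`. -/
def maximal {n : ℕ} (μ : Measure (Fin n → ℝ)) (x : Fin n → ℝ) : ℝ≥0∞ :=
  ⨆ (Q : Cube n) (_ : Q.memP) (_ : x ∈ Q.toSet), μ Q.toSet / volume Q.toSet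

/-- The dyadic maximal function relative to the grid `𝒟^β`. -/
def dyadicMaximal {n : ℕ} (β : ℤ → Fin n → Bool) (μ : Measure (Fin n → ℝ))
    (x : Fin n → ℝ) : ℝ≥0∞ :=
  ⨆ (Q : Cube n) (_ : memGrid β Q) (_ : x ∈ Q.toSet), μ Q.toSet / volume Q.toSet

/-- The two-weight Muckenhoupt constant `A₂(σ,ω)`. -/
def A2 {n : ℕ} (σ ω : Measure (Fin n → ℝ)) : ℝ≥0∞ :=
  ⨆ (Q : Cube n) (_ : Q.memP), (σ Q.toSet / volume Q.toSet) * (ω Q.toSet / volume Q.toSet)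

/-- The operator norm `𝔑_M(σ,ω)` of the maximal function from `L²(σ)` to `L²(ω)`:
the least `N` with `∫ M(fσ)² dω ≤ N² ∫ f² dσ` for all (nonnegative) `f`. -/
def opNorm {n : ℕ} (σ ω : Measure (Fin n → ℝ)) : ℝ≥0∞ :=
  sInf {N : ℝ≥0∞ | ∀ f : (Fin n → ℝ) → ℝ≥0∞, Measurable f →
    ∫⁻ x, (maximal (σ.withDensity f) x) ^ 2 ∂ω ≤ N ^ 2 * ∫⁻ x, (f x) ^ 2 ∂σ}

/-- `φ` is an admissible mollifier on `ℝⁿ`: smooth, `0 ≤ φ ≤ 1`, supported in `(−1,1)ⁿ`,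
at least `2^{−n}` on `(−5/8,5/8)ⁿ`, with `∫ φ = 1`. -/
def IsAdmissibleMollifier {n : ℕ} (φ : (Fin n → ℝ) → ℝ) : Prop :=
  ContDiff ℝ (⊤ : ℕ∞) φ ∧
  (∀ x, φ x ∈ Set.Icc (0:ℝ) 1) ∧
  (∀ x, φ x ≠ 0 → ∀ i, |x i| < 1) ∧
  (∀ x : Fin n → ℝ, (∀ i, |x i| < 5/8) → (2:ℝ) ^ (-(n:ℤ)) ≤ φ x) ∧
  (∫ x, φ x) = 1

/-- The mollification `ν_δ = ν ∗ φ_δ` of a measure `ν`, where `φ_δ(x) = δ^{−n} φ(x/δ)`: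
the measure with density `x ↦ ∫ φ_δ(x−y) dν(y)` with respect to Lebesgue measure. -/
def mollify {n : ℕ} (φ : (Fin n → ℝ) → ℝ) (δ : ℝ) (ν : Measure (Fin n → ℝ)) :
    Measure (Fin n → ℝ) :=
  volume.withDensity fun x => ∫⁻ y, ENNReal.ofReal ((δ ^ n)⁻¹ * φ (δ⁻¹ • (x - y))) ∂ν

/-- The `δ`-enlargement `B_Q(δ) = ∪_{y ∈ Q} (y + [−δ,δ]ⁿ)` of a cube `Q`. -/
def enlarge {n : ℕ} (Q : Cube n) (δ : ℝ) : Set (Fin n → ℝ) :=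
  {x | ∃ y ∈ Q.toSet, ∀ i, |x i - y i| ≤ δ}

/-
By Tonelli, `(1_Q σ_δ)(P) = ∫ (∫_{P ∩ Q} φ_δ(z - y) dz) dσ(y)`, and the inner integral is at most
`δ⁻ⁿ |P ∩ B(y, δ)| ≤ δ⁻ⁿ min(ℓ(P), 2δ)ⁿ`; it vanishes unless `y` lies within `δ` of a point of
`P ∩ Q`, hence in `B_Q(δ)` and in a cube `P' ∈ 𝒫ⁿ` containing `B_P(δ)` with
`ℓ(P') ≤ 2(ℓ(P) + 2δ)`. As `min(ℓ(P), 2δ) · ℓ(P') ≤ 8δ ℓ(P)`, the average of `1_Q σ_δ` over `P`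
is at most `8ⁿ` times the average of `1_{B_Q(δ)} σ` over `P' ∋ x`.
-/

open Metric

namespace Cube

variable {n : ℕ}

lemma toSet_eq_pi (Q : Cube n) :
    Q.toSet = Set.pi univ fun i => Ico (Q.corner i) (Q.corner i + Q.side) := by
  ext x; simp [toSet, Set.mem_pi]

lemma measurableSet_toSet (Q : Cube n) : MeasurableSet Q.toSet := by
  rw [toSet_eq_pi]; exact MeasurableSet.univ_pi fun _ => measurableSet_Ico

lemma volume_toSet (Q : Cube n) : volume Q.toSet = ENNReal.ofReal (Q.side ^ n) := by
  rw [toSet_eq_pi, volume_pi_pi]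
  simp [Real.volume_Ico, ENNReal.ofReal_pow Q.side_pos.le]

lemma volume_toSet_inter_ball_le (Q : Cube n) (y : Fin n → ℝ) {δ : ℝ} (hδ : 0 < δ) :
    volume (Q.toSet ∩ ball y δ) ≤ ENNReal.ofReal (min Q.side (2 * δ)) ^ n := by
  rw [toSet_eq_pi, ball_pi y hδ, ← pi_inter_distrib, volume_pi_pi]
  calc ∏ i, volume (Ico (Q.corner i) (Q.corner i + Q.side) ∩ ball (y i) δ)
      ≤ ∏ _i : Fin n, ENNReal.ofReal (min Q.side (2 * δ)) := by
        gcongr with i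
        rw [ENNReal.ofReal_min]
        refine le_min ((measure_mono inter_subset_left).trans_eq ?_)
          ((measure_mono inter_subset_right).trans_eq ?_)
        · rw [Real.volume_Ico, add_sub_cancel_left]
        · rw [Real.volume_ball, ENNReal.ofReal_mul zero_le_two, ENNReal.ofReal_ofNat]
    _ = ENNReal.ofReal (min Q.side (2 * δ)) ^ n := by simp

lemma exists_memP_enlarge_subset (P : Cube n) {δ : ℝ} (hδ : 0 ≤ δ) :
    ∃ P' : Cube n, P'.memP ∧ enlarge P δ ⊆ P'.toSet ∧ P'.side ≤ 2 * (P.side + 2 * δ) := by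
  obtain ⟨m, hm_le, hm_lt⟩ :=
    exists_mem_Ico_zpow (x := P.side + 2 * δ) (y := (2 : ℝ)) (by linarith [P.side_pos])
      one_lt_two
  refine ⟨⟨P.corner - fun _ => δ, 2 ^ (m + 1), zpow_pos two_pos _⟩, ⟨m + 1, rfl⟩, ?_, ?_⟩
  · rintro y ⟨z, hz, hyz⟩ i
    obtain ⟨hz_lo, hz_hi⟩ := hz i
    obtain ⟨hyz_lo, hyz_hi⟩ := abs_le.1 (hyz i)
    simp only [Pi.sub_apply]
    constructor <;> linarith
  · show (2 : ℝ) ^ (m + 1) ≤ _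
    rw [zpow_add_one₀ two_ne_zero]
    linarith

end Cube

lemma closedBall_subset_enlarge {n : ℕ} {Q : Cube n} {z : Fin n → ℝ} (hz : z ∈ Q.toSet)
    (δ : ℝ) : closedBall z δ ⊆ enlarge Q δ := fun y hy =>
  ⟨z, hz, fun i => (Real.dist_eq _ _).symm.trans_le ((dist_le_pi_dist y z i).trans hy)⟩

section Mollifier

variable {n : ℕ} {φ : (Fin n → ℝ) → ℝ} {δ : ℝ}

def mollifierKernel (φ : (Fin n → ℝ) → ℝ) (δ : ℝ) (x y : Fin n → ℝ) : ℝ≥0∞ :=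
  ENNReal.ofReal ((δ ^ n)⁻¹ * φ (δ⁻¹ • (x - y)))

lemma mollify_apply (φ : (Fin n → ℝ) → ℝ) (δ : ℝ) (ν : Measure (Fin n → ℝ))
    {A : Set (Fin n → ℝ)} (hA : MeasurableSet A) :
    mollify φ δ ν A = ∫⁻ x in A, ∫⁻ y, mollifierKernel φ δ x y ∂ν :=
  withDensity_apply _ hA

lemma measurable_uncurry_mollifierKernel (hφ : Measurable φ) :
    Measurable (Function.uncurry (mollifierKernel φ δ)) :=
  ENNReal.measurable_ofReal.comp <| measurable_const.mul <|
    hφ.comp <| (measurable_fst.sub measurable_snd).const_smul δ⁻¹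

lemma mollifierKernel_le_indicator_ball (hφ_le : ∀ x, φ x ≤ 1)
    (hφ_supp : ∀ x, φ x ≠ 0 → ‖x‖ < 1) (hδ : 0 < δ) (x y : Fin n → ℝ) :
    mollifierKernel φ δ x y ≤ (ball y δ).indicator (fun _ => ENNReal.ofReal (δ ^ n)⁻¹) x := by
  by_cases hx : x ∈ ball y δ
  · rw [indicator_of_mem hx]
    exact ENNReal.ofReal_le_ofReal <|
      mul_le_of_le_one_right (inv_nonneg.2 (pow_nonneg hδ.le n)) (hφ_le _)
  · rw [indicator_of_notMem hx, nonpos_iff_eq_zero, mollifierKernel, ENNReal.ofReal_eq_zero]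
    suffices φ (δ⁻¹ • (x - y)) = 0 by rw [this, mul_zero]
    by_contra hne
    have := hφ_supp _ hne
    rw [norm_smul, norm_inv, Real.norm_of_nonneg hδ.le, inv_mul_lt_one₀ hδ,
      ← dist_eq_norm] at this
    exact hx this

lemma mollify_apply_le (hφ : Measurable φ) (hφ_le : ∀ x, φ x ≤ 1)
    (hφ_supp : ∀ x, φ x ≠ 0 → ‖x‖ < 1) (hδ : 0 < δ) (ν : Measure (Fin n → ℝ)) [SFinite ν]
    {A T : Set (Fin n → ℝ)} (hA : MeasurableSet A) (hAT : ∀ z ∈ A, ball z δ ⊆ T) {V : ℝ≥0∞}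
    (hV : ∀ y, volume (A ∩ ball y δ) ≤ V) :
    mollify φ δ ν A ≤ ENNReal.ofReal (δ ^ n)⁻¹ * V * ν T := by
  have hslice : ∀ y, ∫⁻ x in A, mollifierKernel φ δ x y
      ≤ T.indicator (fun _ => ENNReal.ofReal (δ ^ n)⁻¹ * V) y := by
    intro y
    calc ∫⁻ x in A, mollifierKernel φ δ x y
        ≤ ∫⁻ x in A, (ball y δ).indicator (fun _ => ENNReal.ofReal (δ ^ n)⁻¹) x :=
          lintegral_mono fun x => mollifierKernel_le_indicator_ball hφ_le hφ_supp hδ x y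
      _ = ENNReal.ofReal (δ ^ n)⁻¹ * volume (A ∩ ball y δ) := by
          rw [lintegral_indicator_const measurableSet_ball,
            Measure.restrict_apply measurableSet_ball, inter_comm]
      _ ≤ T.indicator (fun _ => ENNReal.ofReal (δ ^ n)⁻¹ * V) y := by
          by_cases hy : y ∈ T
          · rw [indicator_of_mem hy]
            exact mul_le_mul_right (hV y) _
          · have hempty : A ∩ ball y δ = ∅ := eq_empty_of_forall_notMem fun z ⟨hzA, hzy⟩ =>
              hy (hAT z hzA (mem_ball_comm.1 hzy))
            simp [hempty]
  calc mollify φ δ ν A = ∫⁻ y, (∫⁻ x in A, mollifierKernel φ δ x y) ∂ν := by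
        rw [mollify_apply φ δ ν hA,
          lintegral_lintegral_swap (measurable_uncurry_mollifierKernel hφ).aemeasurable]
    _ ≤ ∫⁻ y, T.indicator (fun _ => ENNReal.ofReal (δ ^ n)⁻¹ * V) y ∂ν := lintegral_mono hslice
    _ ≤ ENNReal.ofReal (δ ^ n)⁻¹ * V * ν T := lintegral_indicator_const_le _ _

end Mollifier

lemma min_mul_le_of_le_two_mul_add {s δ S : ℝ} (hs : 0 ≤ s) (hδ : 0 ≤ δ)
    (hS_le : S ≤ 2 * (s + 2 * δ)) : min s (2 * δ) * S ≤ 8 * (δ * s) := by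
  nlinarith [min_le_left s (2 * δ), min_le_right s (2 * δ), le_min hs (by linarith : 0 ≤ 2 * δ)]

lemma ofReal_inv_pow_mul_min_pow_mul_div_le {n : ℕ} {s δ S : ℝ} (hs : 0 < s) (hδ : 0 < δ)
    (hS : 0 < S) (hS_le : S ≤ 2 * (s + 2 * δ)) (m : ℝ≥0∞) :
    ENNReal.ofReal (δ ^ n)⁻¹ * ENNReal.ofReal (min s (2 * δ)) ^ n * m / ENNReal.ofReal (s ^ n)
      ≤ 8 ^ n * (m / ENNReal.ofReal (S ^ n)) := by
  have hmin : 0 ≤ min s (2 * δ) := le_min hs.le (by linarith)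
  have hreal : (δ ^ n)⁻¹ * min s (2 * δ) ^ n / s ^ n ≤ 8 ^ n / S ^ n := by
    rw [div_le_div_iff₀ (by positivity) (by positivity), mul_assoc, ← mul_pow,
      inv_mul_le_iff₀ (by positivity), ← mul_pow, ← mul_pow, ← mul_assoc]
    exact pow_le_pow_left₀ (by positivity)
      (by nlinarith [min_mul_le_of_le_two_mul_add hs.le hδ.le hS_le]) n
  calc ENNReal.ofReal (δ ^ n)⁻¹ * ENNReal.ofReal (min s (2 * δ)) ^ n * m
        / ENNReal.ofReal (s ^ n)
      = m * ENNReal.ofReal ((δ ^ n)⁻¹ * min s (2 * δ) ^ n / s ^ n) := by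
        rw [ENNReal.ofReal_div_of_pos (by positivity), ENNReal.ofReal_mul (by positivity),
          ENNReal.ofReal_pow hmin, mul_comm _ m, mul_div_assoc]
    _ ≤ m * ENNReal.ofReal (8 ^ n / S ^ n) := by gcongr
    _ = 8 ^ n * (m / ENNReal.ofReal (S ^ n)) := by
        rw [ENNReal.ofReal_div_of_pos (by positivity), ENNReal.ofReal_pow (by norm_num),
          ENNReal.ofReal_ofNat, ← mul_div_assoc, ← mul_div_assoc, mul_comm]

/-- **Mollified maximal function controlled by the maximal function of the enlarged
restriction.** There is a constant `C` depending only on the dimension `n` and the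
mollifier `φ` such that for every locally finite positive Borel measure `σ` on `ℝⁿ`,
every cube `Q ∈ 𝒫ⁿ`, every `0 < ε ≤ ℓ(Q)`, and every `x ∈ ℝⁿ`:
`M(1_Q σ_{8ε})(x) ≤ C · M(1_{B_Q(8ε)} σ)(x)`. -/
theorem mollified_maximal_enlargement
    {n : ℕ} (φ : (Fin n → ℝ) → ℝ) (hφ : IsAdmissibleMollifier φ) :
    ∃ C : ℝ≥0∞, 0 < C ∧ C ≠ ⊤ ∧
      ∀ σ : Measure (Fin n → ℝ), IsLocallyFiniteMeasure σ →
      ∀ Q : Cube n, Q.memP →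
      ∀ ε : ℝ, 0 < ε → ε ≤ Q.side →
      ∀ x : Fin n → ℝ,
        maximal ((mollify φ (8 * ε) σ).restrict Q.toSet) x
          ≤ C * maximal (σ.restrict (enlarge Q (8 * ε))) x := by
  obtain ⟨hφ_smooth, hφ_range, hφ_supp, -, -⟩ := hφ
  refine ⟨8 ^ n, by positivity, ENNReal.pow_ne_top (by norm_num), ?_⟩
  -- local finiteness makes `σ` σ-finite, which Tonelli's theorem needs
  intro σ _ Q _ ε hε _ x
  have hδ : 0 < 8 * ε := by positivity
  refine iSup₂_le fun P _ => iSup_le fun hxP => ?_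
  obtain ⟨P', hP', hPP', hP'_side⟩ := P.exists_memP_enlarge_subset hδ.le
  have hmass : (mollify φ (8 * ε) σ).restrict Q.toSet P.toSet
      ≤ ENNReal.ofReal ((8 * ε) ^ n)⁻¹ * ENNReal.ofReal (min P.side (2 * (8 * ε))) ^ n
        * σ.restrict (enlarge Q (8 * ε)) P'.toSet := by
    rw [Measure.restrict_apply P.measurableSet_toSet,
      Measure.restrict_apply P'.measurableSet_toSet]
    refine mollify_apply_le hφ_smooth.continuous.measurable (fun x => (hφ_range x).2)
      (fun x hx => (pi_norm_lt_iff one_pos).2 fun i => by simpa using hφ_supp x hx i) hδ σ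
      (P.measurableSet_toSet.inter Q.measurableSet_toSet) (fun z hz => ?_)
      (fun y => (measure_mono (inter_subset_inter_left _ inter_subset_left)).trans
        (P.volume_toSet_inter_ball_le y hδ))
    exact ball_subset_closedBall.trans <| subset_inter
      ((closedBall_subset_enlarge hz.1 _).trans hPP') (closedBall_subset_enlarge hz.2 _)
  calc (mollify φ (8 * ε) σ).restrict Q.toSet P.toSet / volume P.toSet
      ≤ 8 ^ n * (σ.restrict (enlarge Q (8 * ε)) P'.toSet / volume P'.toSet) := by
        rw [P.volume_toSet, P'.volume_toSet]
        exact (ENNReal.div_le_div_right hmass _).trans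
          (ofReal_inv_pow_mul_min_pow_mul_div_le P.side_pos hδ P'.side_pos hP'_side _)
    _ ≤ 8 ^ n * maximal (σ.restrict (enlarge Q (8 * ε))) x := by
        gcongr
        exact le_iSup₂_of_le P' hP' <| le_iSup_of_le
          (hPP' (closedBall_subset_enlarge hxP _ (mem_closedBall_self hδ.le))) le_rfl
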